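/- (Sign condition at the controlled end.) If λ is an eigenvalue of the Boussinesq spectral problem and φ is an associated eigenfunction, then φ'(l) · Tφ(l) < 0, where Tφ = (σφ'')' − qφ', i.e. φ'(l) · ((σφ'')'(l) − q(l)φ'(l)) < 0. -/

import Mathlib

/-!
Write `u = φ'`, `w = σφ''` and `ψ = Tφ = w' − qu`, so that `φ' = u`, `u' = w/σ`, `w' = ψ + qu` and
`ψ' = λρφ`. The energy `ψφ − wu` vanishes at both ends and has derivative `λρφ² − qu² − w²/σ`,
which forces `λ > 0`. If `u(l) = ψ(l) = 0`, the whole state vanishes at `l` and Grönwall's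
inequality gives `φ ≡ 0` on `[0,l]`. Otherwise the lexicographic sign of `(u(l), ψ(l))` fixes the
sign of `φ` just left of `l`; say `φ > 0` on `(x₀, l)`, where `x₀` is the last zero of `φ` before
that. There `ψ` is increasing. If `ψ(l) ≤ 0`, then `ψ < 0` on `[x₀, l)`; at a negative minimum `r`
of `u` to the right of a critical point of `φ` we have `w(r) = 0`, and just left of `r` this forces
`w' < 0`, then `w > 0`, then `u' > 0`, contradicting the minimality of `u(r)`. Hence `ψ(l) > 0`,
and `φ > 0` just left of `l` then leaves only `u(l) < 0`.
-/

open Set intervalIntegral MeasureTheory Filter Topology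

noncomputable section

/-- The fourth-order Boussinesq differential operator `φ ↦ (σ φ'')'' − (q φ')'`. -/
def boussinesqOp (σ q : ℝ → ℝ) (φ : ℝ → ℝ) : ℝ → ℝ :=
  fun x => deriv (deriv (fun t => σ t * deriv (deriv φ) t)) x
    - deriv (fun t => q t * deriv φ t) x

/-- `φ` is a (nontrivial) eigenfunction of the Boussinesq spectral problem on `[0,l]`
with eigenvalue `lam`: it is `C⁴`, not identically zero on `[0,l]`, satisfies
`(σ φ'')'' − (q φ')' = lam ρ φ` on `[0,l]` and the boundary conditions
`φ(0) = φ''(0) = φ(l) = φ''(l) = 0`. -/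
def IsBoussinesqEigenpair (σ q ρ : ℝ → ℝ) (l lam : ℝ) (φ : ℝ → ℝ) : Prop :=
  ContDiff ℝ 4 φ ∧ (∃ x ∈ Icc (0:ℝ) l, φ x ≠ 0) ∧
    (∀ x ∈ Icc (0:ℝ) l, boussinesqOp σ q φ x = lam * ρ x * φ x) ∧
    φ 0 = 0 ∧ deriv (deriv φ) 0 = 0 ∧ φ l = 0 ∧ deriv (deriv φ) l = 0

/-- `lam` is an eigenvalue of the Boussinesq spectral problem on `[0,l]`. -/
def IsBoussinesqEigenvalue (σ q ρ : ℝ → ℝ) (l lam : ℝ) : Prop :=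
  ∃ φ : ℝ → ℝ, IsBoussinesqEigenpair σ q ρ l lam φ

section SignPropagation

variable {f f' : ℝ → ℝ} {a b : ℝ}

theorem strictMonoOn_Icc_of_hasDerivAt_pos (hf : ∀ x ∈ Icc a b, HasDerivAt f (f' x) x)
    (hf' : ∀ x ∈ Ioo a b, 0 < f' x) : StrictMonoOn f (Icc a b) :=
  strictMonoOn_of_hasDerivWithinAt_pos (convex_Icc a b)
    (HasDerivAt.continuousOn hf) (fun x hx ↦ (hf x (interior_subset hx)).hasDerivWithinAt)
    (fun x hx ↦ hf' x (by rwa [interior_Icc] at hx))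

theorem eventually_nhdsLT_lt_of_hasDerivAt_pos (hf : ∀ᶠ x in 𝓝[≤] b, HasDerivAt f (f' x) x)
    (hf' : ∀ᶠ x in 𝓝[<] b, 0 < f' x) : ∀ᶠ x in 𝓝[<] b, f x < f b := by
  obtain ⟨c, hcb, hc⟩ := mem_nhdsLE_iff_exists_Icc_subset.mp hf
  obtain ⟨c', hc'b, hc'⟩ := mem_nhdsLT_iff_exists_Ioo_subset.mp hf'
  have hdb : max c c' < b := max_lt hcb hc'b
  have hmono : StrictMonoOn f (Icc (max c c') b) :=
    strictMonoOn_Icc_of_hasDerivAt_pos (fun x hx ↦ hc ⟨le_of_max_le_left hx.1, hx.2⟩)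
      (fun x hx ↦ hc' ⟨(le_max_right c c').trans_lt hx.1, hx.2⟩)
  filter_upwards [Ioo_mem_nhdsLT hdb] with x hx
  exact hmono ⟨hx.1.le, hx.2.le⟩ ⟨hdb.le, le_rfl⟩ hx.2

theorem eventually_nhdsLT_lt_of_hasDerivAt_neg (hf : ∀ᶠ x in 𝓝[≤] b, HasDerivAt f (f' x) x)
    (hf' : ∀ᶠ x in 𝓝[<] b, f' x < 0) : ∀ᶠ x in 𝓝[<] b, f b < f x := by
  have := eventually_nhdsLT_lt_of_hasDerivAt_pos (f := fun x ↦ -f x) (hf.mono fun x hx ↦ hx.neg)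
    (hf'.mono fun x hx ↦ neg_pos.mpr hx)
  simpa only [neg_lt_neg_iff] using this

end SignPropagation

theorem exists_zero_forall_pos_Ioc {f : ℝ → ℝ} {a b : ℝ} (hab : a ≤ b)
    (hf : ContinuousOn f (Icc a b)) (ha : f a = 0) (hb : 0 < f b) :
    ∃ c ∈ Ico a b, f c = 0 ∧ ∀ x ∈ Ioc c b, 0 < f x := by
  set Z := Icc a b ∩ f ⁻¹' {0}
  have hZ : IsClosed Z := hf.preimage_isClosed_of_isClosed isClosed_Icc isClosed_singleton
  have hZa : a ∈ Z := ⟨left_mem_Icc.mpr hab, ha⟩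
  have hZb : BddAbove Z := bddAbove_Icc.mono inter_subset_left
  obtain ⟨⟨hac, hcb⟩, hc⟩ := hZ.csSup_mem ⟨a, hZa⟩ hZb
  have hne : ∀ x ∈ Ioc (sSup Z) b, f x ≠ 0 := fun x hx hx0 ↦
    hx.1.not_ge (le_csSup hZb ⟨⟨hac.trans hx.1.le, hx.2⟩, hx0⟩)
  have hcb' : sSup Z < b := lt_of_le_of_ne hcb fun h ↦ hb.ne' (h ▸ hc)
  refine ⟨sSup Z, ⟨hac, hcb'⟩, hc, fun x hx ↦ (hne x hx).lt_or_gt.resolve_left fun hx0 ↦ ?_⟩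
  obtain ⟨y, hy, hy0⟩ := intermediate_value_Icc hx.2 (hf.mono (Icc_subset_Icc (hac.trans hx.1.le)
    le_rfl)) ⟨hx0.le, hb.le⟩
  exact hne y ⟨hx.1.trans_le hy.1, hy.2⟩ hy0

theorem eqOn_zero_of_norm_deriv_le_mul_norm_of_right_eq_zero {E : Type*} [NormedAddCommGroup E]
    [NormedSpace ℝ E] {f f' : ℝ → E} {K a b : ℝ} (hf : ∀ x ∈ Icc a b, HasDerivAt f (f' x) x)
    (bound : ∀ x ∈ Icc a b, ‖f' x‖ ≤ K * ‖f x‖) (hb : f b = 0) : EqOn f 0 (Icc a b) := by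
  have hmem : ∀ x ∈ Icc a b, a + b - x ∈ Icc a b := fun x hx ↦
    ⟨by linarith [hx.2], by linarith [hx.1]⟩
  have hg : ∀ x ∈ Icc a b, HasDerivAt (fun t ↦ f (a + b - t)) (-f' (a + b - x)) x := fun x hx ↦ by
    simpa [Function.comp_def] using (hf _ (hmem x hx)).scomp x ((hasDerivAt_id x).const_sub (a + b))
  intro x hx
  simpa using eq_zero_of_abs_deriv_le_mul_abs_self_of_eq_zero_right
    (fun t ht ↦ (hg t ht).continuousAt.continuousWithinAt)
    (fun t ht ↦ (hg t (Ico_subset_Icc_self ht)).hasDerivWithinAt)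
    (by simpa using hb) (fun t ht ↦ by simpa using bound _ (hmem t (Ico_subset_Icc_self ht)))
    (a + b - x) (hmem x hx)

def boussinesqT (σ q φ : ℝ → ℝ) : ℝ → ℝ :=
  fun x => deriv (fun t => σ t * deriv (deriv φ) t) x - q x * deriv φ x

/-- First-order form of `(σφ'')'' − (qφ')' = λρφ` on `[0,l]`, in the unknowns `φ`, `u = φ'`,
`w = σφ''` and `ψ = w' − qu = Tφ`. -/
structure IsBoussinesqSystem (σ q ρ : ℝ → ℝ) (l lam : ℝ) (φ u w ψ : ℝ → ℝ) : Prop where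
  hasDerivAt_φ : ∀ x ∈ Icc 0 l, HasDerivAt φ (u x) x
  hasDerivAt_u : ∀ x ∈ Icc 0 l, HasDerivAt u (w x / σ x) x
  hasDerivAt_w : ∀ x ∈ Icc 0 l, HasDerivAt w (ψ x + q x * u x) x
  hasDerivAt_ψ : ∀ x ∈ Icc 0 l, HasDerivAt ψ (lam * ρ x * φ x) x

theorem isBoussinesqSystem_of_contDiff {σ q ρ φ : ℝ → ℝ} {l lam : ℝ} (hφ : ContDiff ℝ 4 φ)
    (hσ : ContDiff ℝ 2 σ) (hq : ContDiff ℝ 1 q) (hσ0 : ∀ x ∈ Icc 0 l, σ x ≠ 0)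
    (heq : ∀ x ∈ Icc 0 l, boussinesqOp σ q φ x = lam * ρ x * φ x) :
    IsBoussinesqSystem σ q ρ l lam φ (deriv φ) (fun t => σ t * deriv (deriv φ) t)
      (boussinesqT σ q φ) := by
  have hφ1 : ContDiff ℝ 3 (deriv φ) := hφ.deriv'
  have hφ2 : ContDiff ℝ 2 (deriv (deriv φ)) := hφ1.deriv'
  have hw : ContDiff ℝ 2 (fun t => σ t * deriv (deriv φ) t) := hσ.mul hφ2
  refine ⟨fun x _ ↦ (hφ.differentiable (by norm_num) x).hasDerivAt, fun x hx ↦ ?_,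
    fun x _ ↦ ?_, fun x hx ↦ ?_⟩
  · rw [mul_div_cancel_left₀ _ (hσ0 x hx)]
    exact (hφ1.differentiable (by norm_num) x).hasDerivAt
  · rw [boussinesqT, sub_add_cancel]
    exact (hw.differentiable (by norm_num) x).hasDerivAt
  · rw [← heq x hx]
    exact (((hw.deriv' (n := 1)).differentiable one_ne_zero x).hasDerivAt).sub
      ((hq.differentiable one_ne_zero).mul (hφ1.differentiable (by norm_num)) x).hasDerivAt

namespace IsBoussinesqSystem

variable {σ q ρ φ u w ψ : ℝ → ℝ} {l lam : ℝ}

theorem neg (hs : IsBoussinesqSystem σ q ρ l lam φ u w ψ) :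
    IsBoussinesqSystem σ q ρ l lam (-φ) (-u) (-w) (-ψ) where
  hasDerivAt_φ x hx := (hs.hasDerivAt_φ x hx).neg
  hasDerivAt_u x hx := by simpa [neg_div] using (hs.hasDerivAt_u x hx).neg
  hasDerivAt_w x hx := by simpa [add_comm] using (hs.hasDerivAt_w x hx).neg
  hasDerivAt_ψ x hx := by simpa using (hs.hasDerivAt_ψ x hx).neg

theorem hasDerivAt_energy (hs : IsBoussinesqSystem σ q ρ l lam φ u w ψ) {x : ℝ}
    (hx : x ∈ Icc 0 l) :
    HasDerivAt (fun x => ψ x * φ x - w x * u x)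
      (lam * ρ x * φ x ^ 2 - q x * u x ^ 2 - w x ^ 2 / σ x) x :=
  (((hs.hasDerivAt_ψ x hx).mul (hs.hasDerivAt_φ x hx)).sub
    ((hs.hasDerivAt_w x hx).mul (hs.hasDerivAt_u x hx))).congr_deriv (by ring)

theorem eqOn_zero_of_w_eq_zero (hs : IsBoussinesqSystem σ q ρ l lam φ u w ψ) (hl : 0 < l)
    (hφ0 : φ 0 = 0) (hφl : φ l = 0) (hw : ∀ x ∈ Ico 0 l, w x = 0) : EqOn φ 0 (Icc 0 l) := by
  have hu : ∀ x ∈ Icc 0 l, u x = u 0 := constant_of_has_deriv_right_zero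
    (HasDerivAt.continuousOn hs.hasDerivAt_u) fun x hx ↦ by
      simpa [hw x hx] using (hs.hasDerivAt_u x (Ico_subset_Icc_self hx)).hasDerivWithinAt
  obtain ⟨c, hc, huc⟩ := exists_hasDerivAt_eq_zero hl (HasDerivAt.continuousOn hs.hasDerivAt_φ)
    (hφ0.trans hφl.symm) fun x hx ↦ hs.hasDerivAt_φ x (Ioo_subset_Icc_self hx)
  have hφ : ∀ x ∈ Icc 0 l, φ x = φ 0 := constant_of_has_deriv_right_zero
    (HasDerivAt.continuousOn hs.hasDerivAt_φ) fun x hx ↦ by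
      have hx' := Ico_subset_Icc_self hx
      simpa [hu x hx', ← hu c (Ioo_subset_Icc_self hc), huc] using
        (hs.hasDerivAt_φ x hx').hasDerivWithinAt
  exact fun x hx ↦ (hφ x hx).trans hφ0

theorem lam_pos (hs : IsBoussinesqSystem σ q ρ l lam φ u w ψ) (hl : 0 < l)
    (hσ : ∀ x ∈ Icc 0 l, 0 < σ x) (hρ : ∀ x ∈ Icc 0 l, 0 < ρ x) (hq : ∀ x ∈ Icc 0 l, 0 ≤ q x)
    (hφ0 : φ 0 = 0) (hw0 : w 0 = 0) (hφl : φ l = 0) (hwl : w l = 0)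
    (hnt : ∃ x ∈ Icc 0 l, φ x ≠ 0) : 0 < lam := by
  by_contra! hlam
  set H := fun x => ψ x * φ x - w x * u x
  have hdH : ∀ x ∈ Icc 0 l,
      lam * ρ x * φ x ^ 2 - q x * u x ^ 2 - w x ^ 2 / σ x ≤ -(w x ^ 2 / σ x) := fun x hx ↦ by
    have := mul_nonpos_of_nonpos_of_nonneg (mul_nonpos_of_nonpos_of_nonneg hlam (hρ x hx).le)
      (sq_nonneg (φ x))
    have := mul_nonneg (hq x hx) (sq_nonneg (u x))
    linarith
  have hanti : AntitoneOn H (Icc 0 l) :=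
    antitoneOn_of_hasDerivWithinAt_nonpos (convex_Icc 0 l)
      (HasDerivAt.continuousOn fun x hx ↦ hs.hasDerivAt_energy hx)
      (fun x hx ↦ (hs.hasDerivAt_energy (interior_subset hx)).hasDerivWithinAt)
      (fun x hx ↦ (hdH x (interior_subset hx)).trans
        (neg_nonpos.mpr (div_nonneg (sq_nonneg _) (hσ x (interior_subset hx)).le)))
  have hH : ∀ x ∈ Icc 0 l, H x = 0 := fun x hx ↦ le_antisymm
    (by simpa [H, hφ0, hw0] using hanti ⟨le_rfl, hl.le⟩ hx hx.1)
    (by simpa [H, hφl, hwl] using hanti hx ⟨hl.le, le_rfl⟩ hx.2)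
  -- `H` is constant, so its derivative vanishes, and with it the term `w² / σ`.
  have hw : ∀ x ∈ Ico 0 l, w x = 0 := by
    rintro x ⟨hx0, hxl⟩
    rcases hx0.eq_or_lt with rfl | hx0
    · exact hw0
    have hx : x ∈ Icc 0 l := ⟨hx0.le, hxl.le⟩
    have hH0 : HasDerivAt H 0 x := (hasDerivAt_const x (0 : ℝ)).congr_of_eventuallyEq
      (eventually_of_mem (Icc_mem_nhds hx0 hxl) hH)
    have h := hdH x hx
    rw [(hs.hasDerivAt_energy hx).unique hH0, le_neg, neg_zero,
      div_le_iff₀ (hσ x hx), zero_mul] at h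
    exact pow_eq_zero_iff two_ne_zero |>.mp (le_antisymm h (sq_nonneg _))
  obtain ⟨x, hx, hφx⟩ := hnt
  exact hφx (hs.eqOn_zero_of_w_eq_zero hl hφ0 hφl hw hx)

theorem eqOn_zero_of_right_eq_zero (hs : IsBoussinesqSystem σ q ρ l lam φ u w ψ)
    (hσ : ∀ x ∈ Icc 0 l, 0 < σ x) (hσc : ContinuousOn σ (Icc 0 l))
    (hqc : ContinuousOn q (Icc 0 l)) (hρc : ContinuousOn ρ (Icc 0 l))
    (hφl : φ l = 0) (hul : u l = 0) (hwl : w l = 0) (hψl : ψ l = 0) : EqOn φ 0 (Icc 0 l) := by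
  obtain ⟨A, hA⟩ := isCompact_Icc.exists_bound_of_continuousOn
    (hσc.inv₀ fun x hx ↦ (hσ x hx).ne')
  obtain ⟨B, hB⟩ := isCompact_Icc.exists_bound_of_continuousOn hqc
  obtain ⟨C, hC⟩ := isCompact_Icc.exists_bound_of_continuousOn hρc
  set f : ℝ → ℝ × ℝ × ℝ × ℝ := fun t ↦ (φ t, u t, w t, ψ t)
  have hf : ∀ x ∈ Icc 0 l,
      HasDerivAt f (u x, w x / σ x, ψ x + q x * u x, lam * ρ x * φ x) x := fun x hx ↦
    (hs.hasDerivAt_φ x hx).prodMk ((hs.hasDerivAt_u x hx).prodMk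
      ((hs.hasDerivAt_w x hx).prodMk (hs.hasDerivAt_ψ x hx)))
  have bound : ∀ x ∈ Icc 0 l, ‖(u x, w x / σ x, ψ x + q x * u x, lam * ρ x * φ x)‖ ≤
      (1 + A + B + ‖lam‖ * C) * ‖f x‖ := by
    intro x hx
    have hφ : ‖φ x‖ ≤ ‖f x‖ := norm_fst_le (f x)
    have hu : ‖u x‖ ≤ ‖f x‖ := (norm_fst_le _).trans (norm_snd_le (f x))
    have hw : ‖w x‖ ≤ ‖f x‖ :=
      ((norm_fst_le _).trans (norm_snd_le _)).trans (norm_snd_le (f x))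
    have hψ : ‖ψ x‖ ≤ ‖f x‖ :=
      ((norm_snd_le _).trans (norm_snd_le _)).trans (norm_snd_le (f x))
    have hA0 := (norm_nonneg _).trans (hA x hx)
    have hB0 := (norm_nonneg _).trans (hB x hx)
    have hC0 := (norm_nonneg _).trans (hC x hx)
    have hlamC := mul_nonneg (norm_nonneg lam) hC0
    have h1 : ‖w x / σ x‖ ≤ A * ‖f x‖ := by
      rw [div_eq_mul_inv, norm_mul, mul_comm]
      exact mul_le_mul (hA x hx) hw (norm_nonneg _) hA0
    have h2 : ‖ψ x + q x * u x‖ ≤ ‖f x‖ + B * ‖f x‖ := (norm_add_le _ _).trans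
      (add_le_add hψ (norm_mul (q x) (u x) ▸ mul_le_mul (hB x hx) hu (norm_nonneg _) hB0))
    have h3 : ‖lam * ρ x * φ x‖ ≤ ‖lam‖ * C * ‖f x‖ := by
      rw [norm_mul, norm_mul]
      gcongr
      exact hC x hx
    simp only [norm_prod_le_iff]
    refine ⟨?_, ?_, ?_, ?_⟩ <;> nlinarith [norm_nonneg (f x)]
  intro x hx
  simpa [f] using congrArg Prod.fst (eqOn_zero_of_norm_deriv_le_mul_norm_of_right_eq_zero hf bound
    (by simp [f, hφl, hul, hwl, hψl]) hx)

theorem eventually_neg_of_jet_pos (hs : IsBoussinesqSystem σ q ρ l lam φ u w ψ) (hl : 0 < l)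
    (hσ : ∀ x ∈ Icc 0 l, 0 < σ x) (hqc : ContinuousOn q (Icc 0 l)) (hφl : φ l = 0)
    (hwl : w l = 0) (hjet : 0 < u l ∨ (u l = 0 ∧ 0 < ψ l)) : ∀ᶠ x in 𝓝[<] l, φ x < 0 := by
  have hl' : l ∈ Icc 0 l := right_mem_Icc.mpr hl.le
  have hle : Icc 0 l ∈ 𝓝[≤] l := Icc_mem_nhdsLE hl
  have hlt : Icc 0 l ∈ 𝓝[<] l := Icc_mem_nhdsLT hl
  suffices hu : ∀ᶠ x in 𝓝[<] l, 0 < u x by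
    simpa [hφl] using
      eventually_nhdsLT_lt_of_hasDerivAt_pos (eventually_of_mem hle hs.hasDerivAt_φ) hu
  rcases hjet with hul | ⟨hul, hψl⟩
  · exact (continuousAt_const.eventually_lt (hs.hasDerivAt_u l hl').continuousAt hul).filter_mono
      nhdsWithin_le_nhds
  have hw' : ∀ᶠ x in 𝓝[<] l, 0 < ψ x + q x * u x := by
    have hc : ContinuousWithinAt (fun x ↦ ψ x + q x * u x) (Icc 0 l) l :=
      (hs.hasDerivAt_ψ l hl').continuousAt.continuousWithinAt.add
        ((hqc l hl').mul (hs.hasDerivAt_u l hl').continuousAt.continuousWithinAt)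
    exact (hc.eventually_const_lt (by simpa [hul] using hψl)).filter_mono (nhdsWithin_le_of_mem hlt)
  have hw : ∀ᶠ x in 𝓝[<] l, w x < 0 := by
    simpa [hwl] using
      eventually_nhdsLT_lt_of_hasDerivAt_pos (eventually_of_mem hle hs.hasDerivAt_w) hw'
  have hu' : ∀ᶠ x in 𝓝[<] l, w x / σ x < 0 := by
    filter_upwards [hw, hlt] with x hwx hx using div_neg_of_neg_of_pos hwx (hσ x hx)
  simpa [hul] using
    eventually_nhdsLT_lt_of_hasDerivAt_neg (eventually_of_mem hle hs.hasDerivAt_u) hu'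

theorem eventually_lt_of_w_eq_zero (hs : IsBoussinesqSystem σ q ρ l lam φ u w ψ) {r : ℝ}
    (hr : r ∈ Ioc 0 l) (hσ : ∀ x ∈ Icc 0 l, 0 < σ x) (hq : ∀ x ∈ Icc 0 l, 0 ≤ q x)
    (hur : u r < 0) (hwr : w r = 0) (hψ : ∀ᶠ x in 𝓝[<] r, ψ x < 0) :
    ∀ᶠ x in 𝓝[<] r, u x < u r := by
  have hle : Icc 0 l ∈ 𝓝[≤] r := Icc_mem_nhdsLE_of_mem hr
  have hlt : Icc 0 l ∈ 𝓝[<] r := nhdsWithin_mono r Iio_subset_Iic_self hle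
  have hu : ∀ᶠ x in 𝓝[<] r, u x < 0 :=
    ((hs.hasDerivAt_u r (Ioc_subset_Icc_self hr)).continuousAt.eventually_lt continuousAt_const
      hur).filter_mono nhdsWithin_le_nhds
  have hw' : ∀ᶠ x in 𝓝[<] r, ψ x + q x * u x < 0 := by
    filter_upwards [hψ, hu, hlt] with x hψx hux hx
    nlinarith [hq x hx]
  have hw : ∀ᶠ x in 𝓝[<] r, 0 < w x := by
    simpa [hwr] using
      eventually_nhdsLT_lt_of_hasDerivAt_neg (eventually_of_mem hle hs.hasDerivAt_w) hw'
  refine eventually_nhdsLT_lt_of_hasDerivAt_pos (eventually_of_mem hle hs.hasDerivAt_u) ?_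
  filter_upwards [hw, hlt] with x hwx hx using div_pos hwx (hσ x hx)

theorem pos_ψ_of_pos_on_Ioo (hs : IsBoussinesqSystem σ q ρ l lam φ u w ψ) (hlam : 0 < lam)
    (hσ : ∀ x ∈ Icc 0 l, 0 < σ x) (hρ : ∀ x ∈ Icc 0 l, 0 < ρ x) (hq : ∀ x ∈ Icc 0 l, 0 ≤ q x)
    {x₀ : ℝ} (hx₀ : 0 ≤ x₀) (hx₀l : x₀ < l) (hφx₀ : φ x₀ = 0) (hpos : ∀ x ∈ Ioo x₀ l, 0 < φ x)
    (hφl : φ l = 0) (hwl : w l = 0) : 0 < ψ l := by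
  by_contra! hψl
  have hsub : Icc x₀ l ⊆ Icc 0 l := Icc_subset_Icc_left hx₀
  have hψ : ∀ x ∈ Ico x₀ l, ψ x < 0 := fun x hx ↦ (strictMonoOn_Icc_of_hasDerivAt_pos
    (fun y hy ↦ hs.hasDerivAt_ψ y (hsub hy))
    (fun y hy ↦ mul_pos (mul_pos hlam (hρ y (hsub (Ioo_subset_Icc_self hy)))) (hpos y hy))
    (Ico_subset_Icc_self hx) (right_mem_Icc.mpr hx₀l.le) hx.2).trans_le hψl
  obtain ⟨p, hp, hup⟩ := exists_hasDerivAt_eq_zero hx₀l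
    (HasDerivAt.continuousOn fun x hx ↦ hs.hasDerivAt_φ x (hsub hx)) (hφx₀.trans hφl.symm)
    fun x hx ↦ hs.hasDerivAt_φ x (hsub (Ioo_subset_Icc_self hx))
  have hpl : Icc p l ⊆ Icc 0 l := Icc_subset_Icc_left (hx₀.trans hp.1.le)
  obtain ⟨m, hm, hum⟩ := exists_hasDerivAt_eq_slope φ u hp.2
    (HasDerivAt.continuousOn fun x hx ↦ hs.hasDerivAt_φ x (hpl hx))
    fun x hx ↦ hs.hasDerivAt_φ x (hpl (Ioo_subset_Icc_self hx))
  have hum' : u m < 0 := by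
    rw [hum, hφl, zero_sub]
    exact div_neg_of_neg_of_pos (neg_lt_zero.mpr (hpos p hp)) (sub_pos.mpr hp.2)
  obtain ⟨r, hr, hmin⟩ := isCompact_Icc.exists_isMinOn (nonempty_Icc.mpr hp.2.le)
    (HasDerivAt.continuousOn fun x hx ↦ hs.hasDerivAt_u x (hpl hx))
  have hur : u r < 0 := (hmin ⟨hm.1.le, hm.2.le⟩).trans_lt hum'
  have hpr : p < r := hr.1.lt_of_ne (by rintro rfl; linarith)
  have hwr : w r = 0 := by
    rcases hr.2.eq_or_lt with rfl | hrl
    · exact hwl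
    have := (hmin.isLocalMin (Icc_mem_nhds hpr hrl)).hasDerivAt_eq_zero
      (hs.hasDerivAt_u r (hpl hr))
    exact (div_eq_zero_iff.mp this).resolve_right (hσ r (hpl hr)).ne'
  have hψr : ∀ᶠ x in 𝓝[<] r, ψ x < 0 := by
    filter_upwards [Ioo_mem_nhdsLT hpr] with x hx
    exact hψ x ⟨hp.1.le.trans hx.1.le, hx.2.trans_le hr.2⟩
  obtain ⟨x, hux, hx⟩ := ((hs.eventually_lt_of_w_eq_zero ⟨hx₀.trans_lt (hp.1.trans hpr), hr.2⟩
    hσ hq hur hwr hψr).and (Ioo_mem_nhdsLT hpr)).exists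
  exact (hmin ⟨hx.1.le, hx.2.le.trans hr.2⟩).not_gt hux

theorem eventually_pos_or_eventually_neg (hs : IsBoussinesqSystem σ q ρ l lam φ u w ψ)
    (hl : 0 < l) (hσ : ∀ x ∈ Icc 0 l, 0 < σ x) (hqc : ContinuousOn q (Icc 0 l)) (hφl : φ l = 0)
    (hwl : w l = 0) (hjet : ¬(u l = 0 ∧ ψ l = 0)) :
    (∀ᶠ x in 𝓝[<] l, 0 < φ x) ∨ ∀ᶠ x in 𝓝[<] l, φ x < 0 := by
  have hneg := hs.neg.eventually_neg_of_jet_pos hl hσ hqc (by simp [hφl]) (by simp [hwl])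
  simp only [Pi.neg_apply, neg_pos, neg_lt_zero, neg_eq_zero] at hneg
  rcases lt_trichotomy (u l) 0 with hul | hul | hul
  · exact .inl (hneg (.inl hul))
  rcases lt_trichotomy (ψ l) 0 with hψl | hψl | hψl
  · exact .inl (hneg (.inr ⟨hul, hψl⟩))
  · exact absurd ⟨hul, hψl⟩ hjet
  all_goals exact .inr (hs.eventually_neg_of_jet_pos hl hσ hqc hφl hwl (by tauto))

theorem neg_u_and_pos_ψ_of_eventually_pos (hs : IsBoussinesqSystem σ q ρ l lam φ u w ψ)
    (hl : 0 < l) (hlam : 0 < lam) (hσ : ∀ x ∈ Icc 0 l, 0 < σ x) (hρ : ∀ x ∈ Icc 0 l, 0 < ρ x)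
    (hq : ∀ x ∈ Icc 0 l, 0 ≤ q x) (hqc : ContinuousOn q (Icc 0 l)) (hφ0 : φ 0 = 0)
    (hφl : φ l = 0) (hwl : w l = 0) (hpos : ∀ᶠ x in 𝓝[<] l, 0 < φ x) : u l < 0 ∧ 0 < ψ l := by
  obtain ⟨c, hcl, hc⟩ := mem_nhdsLT_iff_exists_Ioo_subset.mp hpos
  set m := (max c 0 + l) / 2
  have hcm : max c 0 < m := by simp only [m]; linarith [max_lt hcl hl]
  have hml : m < l := by simp only [m]; linarith [max_lt hcl hl]
  obtain ⟨x₀, hx₀, hφx₀, hx₀m⟩ := exists_zero_forall_pos_Ioc ((le_max_right c 0).trans hcm.le)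
    (HasDerivAt.continuousOn fun x hx ↦ hs.hasDerivAt_φ x ⟨hx.1, hx.2.trans hml.le⟩) hφ0
    (hc ⟨(le_max_left c 0).trans_lt hcm, hml⟩)
  have hφpos : ∀ x ∈ Ioo x₀ l, 0 < φ x := fun x hx ↦ by
    rcases le_or_gt x m with hxm | hxm
    · exact hx₀m x ⟨hx.1, hxm⟩
    · exact hc ⟨((le_max_left c 0).trans_lt hcm).trans hxm, hx.2⟩
  have hψl := hs.pos_ψ_of_pos_on_Ioo hlam hσ hρ hq hx₀.1 (hx₀.2.trans hml) hφx₀ hφpos hφl hwl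
  refine ⟨lt_of_not_ge fun hul ↦ ?_, hψl⟩
  obtain ⟨x, hx, hx'⟩ := ((hs.eventually_neg_of_jet_pos hl hσ hqc hφl hwl
    (hul.lt_or_eq.imp_right fun h ↦ ⟨h.symm, hψl⟩)).and hpos).exists
  exact hx.not_gt hx'

end IsBoussinesqSystem

/-- **Sign condition at the controlled end.** If `lam` is an eigenvalue with
eigenfunction `φ`, then `φ'(l) ⬝ Tφ(l) < 0` where `Tφ = (σ φ'')' − q φ'`. -/
theorem boussinesq_eigenfunction_sign_condition
    (l : ℝ) (hl : 0 < l)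
    (ρ σ q : ℝ → ℝ)
    (hρs : ContDiff ℝ 3 ρ) (hσs : ContDiff ℝ 3 σ) (hqs : ContDiff ℝ 1 q)
    (ρ0 σ0 : ℝ) (hρ0 : 0 < ρ0) (hσ0 : 0 < σ0)
    (hρb : ∀ x ∈ Icc (0:ℝ) l, ρ0 ≤ ρ x)
    (hσb : ∀ x ∈ Icc (0:ℝ) l, σ0 ≤ σ x)
    (hqb : ∀ x ∈ Icc (0:ℝ) l, 0 ≤ q x)
    (lam : ℝ) (φ : ℝ → ℝ)
    (hφ : IsBoussinesqEigenpair σ q ρ l lam φ) :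
    deriv φ l * (deriv (fun t => σ t * deriv (deriv φ) t) l - q l * deriv φ l) < 0 := by
  obtain ⟨hφs, hnt, heq, hφ0, hφ''0, hφl, hφ''l⟩ := hφ
  have hσ : ∀ x ∈ Icc 0 l, 0 < σ x := fun x hx ↦ hσ0.trans_le (hσb x hx)
  have hρ : ∀ x ∈ Icc 0 l, 0 < ρ x := fun x hx ↦ hρ0.trans_le (hρb x hx)
  have hqc : ContinuousOn q (Icc 0 l) := hqs.continuous.continuousOn
  have hs := isBoussinesqSystem_of_contDiff hφs (hσs.of_le (by norm_num)) hqs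
    (fun x hx ↦ (hσ x hx).ne') heq
  have hw0 : σ 0 * deriv (deriv φ) 0 = 0 := by rw [hφ''0, mul_zero]
  have hwl : σ l * deriv (deriv φ) l = 0 := by rw [hφ''l, mul_zero]
  have hlam := hs.lam_pos hl hσ hρ hqb hφ0 hw0 hφl hwl hnt
  have hjet : ¬(deriv φ l = 0 ∧ boussinesqT σ q φ l = 0) := fun ⟨hul, hψl⟩ ↦ by
    obtain ⟨x, hx, hφx⟩ := hnt
    exact hφx (hs.eqOn_zero_of_right_eq_zero hσ hσs.continuous.continuousOn hqc
      hρs.continuous.continuousOn hφl hul hwl hψl hx)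
  change deriv φ l * boussinesqT σ q φ l < 0
  rcases hs.eventually_pos_or_eventually_neg hl hσ hqc hφl hwl hjet with hpos | hneg
  · obtain ⟨hul, hψl⟩ :=
      hs.neg_u_and_pos_ψ_of_eventually_pos hl hlam hσ hρ hqb hqc hφ0 hφl hwl hpos
    exact mul_neg_of_neg_of_pos hul hψl
  · obtain ⟨hul, hψl⟩ := hs.neg.neg_u_and_pos_ψ_of_eventually_pos hl hlam hσ hρ hqb hqc
      (by simp [hφ0]) (by simp [hφl]) (by simp [hwl]) (by simpa using hneg)
    simp only [Pi.neg_apply, neg_lt_zero, neg_pos] at hul hψl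
    exact mul_neg_of_pos_of_neg hul hψl
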